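/- arXiv:2009.10622 — 3 statements merged into one kernel-verified Lean document; each statement's English description precedes it below -/
import Mathlib

section
/- (Differential entropy bound for the SGaME model). Let s_0 = s_{ψ_0} with ψ_0 ∈ Ψ̃. Set C_{s_0} = (4π)^{-q/2}·A_Σ^{q/2} and H_{s_0} = max{0, ln C_{s_0}}. Then max{0, sup_{x∈[0,1]^p} ∫_{ℝ^q} ln(s_0(y|x))·s_0(y|x) dy} ≤ H_{s_0} < ∞; in particular, for every x ∈ [0,1]^p, ∫_{ℝ^q} ln(s_0(y|x))·s_0(y|x) dy ≤ ln C_{s_0}. -/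
open MeasureTheory Real Finset ProbabilityTheory

noncomputable section

/-- Multivariate Gaussian density on `ℝ^q` with mean `mu` and covariance `S`. -/
def gaussPdf (q : ℕ) (mu : Fin q → ℝ) (S : Matrix (Fin q) (Fin q) ℝ) (y : Fin q → ℝ) : ℝ :=
  (2 * π) ^ (-(q : ℝ) / 2) * S.det ^ (-(1 : ℝ) / 2) *
    Real.exp (-(dotProduct (y - mu) (S⁻¹.mulVec (y - mu))) / 2)

/-- Parameters of a `K`-component softmax-gated mixture of Gaussian experts. -/
structure SGaMEParam (K p q : ℕ) where
  g0 : Fin K → ℝ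
  g : Fin K → Fin p → ℝ
  b0 : Fin K → Fin q → ℝ
  b : Fin K → Matrix (Fin q) (Fin p) ℝ
  cov : Fin K → Matrix (Fin q) (Fin q) ℝ

namespace SGaMEParam
variable {K p q : ℕ}

/-- Gating logit `w_k(x) = γ_{k0} + γ_kᵀ x`. -/
def logit (ψ : SGaMEParam K p q) (k : Fin K) (x : Fin p → ℝ) : ℝ :=
  ψ.g0 k + ∑ j, ψ.g k j * x j

/-- Softmax gating function `g_k(x;γ)`. -/
def gate (ψ : SGaMEParam K p q) (k : Fin K) (x : Fin p → ℝ) : ℝ :=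
  Real.exp (ψ.logit k x) / ∑ l, Real.exp (ψ.logit l x)

/-- Mean of the `k`-th Gaussian expert. -/
def mean (ψ : SGaMEParam K p q) (k : Fin K) (x : Fin p → ℝ) : Fin q → ℝ :=
  fun z => ψ.b0 k z + ((ψ.b k).mulVec x) z

/-- The SGaME conditional density `s_ψ(y|x)`. -/
def density (ψ : SGaMEParam K p q) (x : Fin p → ℝ) (y : Fin q → ℝ) : ℝ :=
  ∑ k, ψ.gate k x * gaussPdf q (ψ.mean k x) (ψ.cov k) y

/-- `‖ψ^{[1,2]}‖₁`, the ℓ1-norm of the gating and expert regression coefficients. -/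
def norm12 (ψ : SGaMEParam K p q) : ℝ :=
  (∑ k, ∑ j, |ψ.g k j|) + (∑ k, ∑ j, ∑ z, |ψ.b k z j|)

end SGaMEParam

/-- The unit cube `[0,1]^p`. -/
def cube (p : ℕ) : Set (Fin p → ℝ) := Set.Icc 0 1

/-- The bounded parameter class `Ψ̃`. -/
def InPsiT {K p q : ℕ} (Agam Abeta aSig ASig : ℝ) (ψ : SGaMEParam K p q) : Prop :=
  (∀ k, (ψ.cov k).IsSymm ∧ (ψ.cov k).PosDef) ∧
  (∀ k, ∀ x ∈ cube p, |ψ.g0 k| + |∑ j, ψ.g k j * x j| ≤ Agam) ∧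
  (∀ k, ∀ x ∈ cube p, ∀ z, |ψ.b0 k z| + |((ψ.b k).mulVec x) z| ≤ Abeta) ∧
  (∀ k, ∀ μ ∈ spectrum ℝ ((ψ.cov k)⁻¹), aSig ≤ μ ∧ μ ≤ ASig)

/-- Average conditional Kullback–Leibler divergence for fixed covariates. -/
def KLn {p q : ℕ} (n : ℕ) (x : Fin n → Fin p → ℝ)
    (s t : (Fin p → ℝ) → (Fin q → ℝ) → ℝ) : ℝ :=
  (1 / n : ℝ) * ∑ i, ∫ y : Fin q → ℝ, Real.log (s (x i) y / t (x i) y) * s (x i) y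

/-- Upper bound `A_G` on the softmax gating functions. -/
def AGbd (K : ℕ) (Agam : ℝ) : ℝ := Real.exp Agam / (K * Real.exp (-Agam))

/-- `H_{s_0}`. -/
def Hs0 (q : ℕ) (ASig : ℝ) : ℝ :=
  max 0 (Real.log ((4 * π) ^ (-(q : ℝ) / 2) * ASig ^ ((q : ℝ) / 2)))

end

/-!
Pointwise `log t ≤ log C + t / C - 1`, so for a probability density `s` one gets
`∫ s log s ≤ log C - 1 + (∫ s²) / C`, and it suffices that `∫ s² ≤ C`. By Jensen,
`s(·|x)² ≤ ∑ₖ gₖ(x) φₖ²`, and `∫ φₖ² = (4π)^(-q/2) det(Σₖ)^(-1/2) ≤ (4π)^(-q/2) A_Σ^(q/2) = C`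
because the eigenvalues of `Σₖ⁻¹` are at most `A_Σ`. The integrability of `s log s` comes from
`|t log t| ≤ 2 √t + t²`, where `√s` and `s²` are dominated by sums of Gaussian-type functions.
-/

open Matrix

section GaussianIntegral

variable {ι : Type*} [Fintype ι]

theorem exp_neg_dotProduct_self_div_two_eq_prod (z : ι → ℝ) :
    exp (-(z ⬝ᵥ z) / 2) = ∏ i, exp (-(1 / 2) * z i ^ 2) := by
  rw [← exp_sum]
  congr 1
  simp only [dotProduct, sq, neg_div, Finset.sum_div, ← Finset.sum_neg_distrib]
  exact Finset.sum_congr rfl fun i _ => by ring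

theorem integrable_exp_neg_dotProduct_self :
    Integrable fun z : ι → ℝ => exp (-(z ⬝ᵥ z) / 2) := by
  simp_rw [exp_neg_dotProduct_self_div_two_eq_prod]
  exact Integrable.fintype_prod fun _ => integrable_exp_neg_mul_sq (by norm_num)

theorem integral_exp_neg_dotProduct_self :
    ∫ z : ι → ℝ, exp (-(z ⬝ᵥ z) / 2) = (2 * π) ^ ((Fintype.card ι : ℝ) / 2) := by
  simp_rw [exp_neg_dotProduct_self_div_two_eq_prod]
  rw [volume_pi, integral_fintype_prod_eq_pow (fun x : ℝ => exp (-(1 / 2) * x ^ 2)),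
    integral_gaussian, sqrt_eq_rpow, ← rpow_natCast, ← rpow_mul (by positivity)]
  congr 1
  · field_simp
  · ring

variable [DecidableEq ι]

noncomputable def Matrix.mulVecMeasurableEquiv (B : Matrix ι ι ℝ) (hB : B.det ≠ 0) :
    (ι → ℝ) ≃ᵐ (ι → ℝ) :=
  haveI := invertibleOfNonzero hB
  (B.toLinearEquiv' B.invertibleOfDetInvertible).toContinuousLinearEquiv.toHomeomorph
    |>.toMeasurableEquiv

theorem Matrix.map_mulVecMeasurableEquiv_volume {B : Matrix ι ι ℝ} (hB : B.det ≠ 0) :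
    Measure.map (B.mulVecMeasurableEquiv hB) volume = ENNReal.ofReal |B.det|⁻¹ • volume := by
  rw [← abs_inv]
  exact Real.map_matrix_volume_pi_eq_smul_volume_pi hB

theorem integral_comp_mulVec {B : Matrix ι ι ℝ} (hB : B.det ≠ 0) (f : (ι → ℝ) → ℝ) :
    ∫ y, f (B *ᵥ y) = |B.det|⁻¹ * ∫ z, f z := by
  have := integral_map_equiv (μ := volume) (B.mulVecMeasurableEquiv hB) f
  rw [Matrix.map_mulVecMeasurableEquiv_volume hB, integral_smul_measure,
    ENNReal.toReal_ofReal (by positivity)] at this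
  exact this.symm

theorem integrable_comp_mulVec_iff {B : Matrix ι ι ℝ} (hB : B.det ≠ 0) {f : (ι → ℝ) → ℝ} :
    Integrable (fun y => f (B *ᵥ y)) ↔ Integrable f := by
  have := integrable_map_equiv (μ := volume) (B.mulVecMeasurableEquiv hB) f
  rw [Matrix.map_mulVecMeasurableEquiv_volume hB, integrable_smul_measure] at this
  · exact this.symm
  all_goals simp [hB]

theorem Matrix.PosDef.exists_det_eq_sqrt_and_dotProduct_mulVec {A : Matrix ι ι ℝ}
    (hA : A.PosDef) :
    ∃ B : Matrix ι ι ℝ, B.det = √A.det ∧ ∀ y, B *ᵥ y ⬝ᵥ B *ᵥ y = y ⬝ᵥ A *ᵥ y := by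
  open scoped MatrixOrder in
  obtain ⟨B, hB, hBB⟩ : ∃ B : Matrix ι ι ℝ, B.PosSemidef ∧ B * B = A :=
    ⟨CFC.sqrt A, (CFC.sqrt_nonneg A).posSemidef, CFC.sqrt_mul_sqrt_self A hA.posSemidef.nonneg⟩
  refine ⟨B, ?_, fun y => ?_⟩
  · rw [← hBB, det_mul, sqrt_mul_self hB.det_nonneg]
  · rw [dotProduct_mulVec, ← vecMul_transpose, ← conjTranspose_eq_transpose_of_trivial, hB.1,
      vecMul_vecMul, ← dotProduct_mulVec, hBB]

theorem Matrix.PosDef.integral_exp_neg_quadForm {A : Matrix ι ι ℝ} (hA : A.PosDef) (m : ι → ℝ) :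
    ∫ y, exp (-((y - m) ⬝ᵥ A *ᵥ (y - m)) / 2) =
      (2 * π) ^ ((Fintype.card ι : ℝ) / 2) * A.det ^ (-(1 : ℝ) / 2) := by
  obtain ⟨B, hBdet, hB⟩ := hA.exists_det_eq_sqrt_and_dotProduct_mulVec
  have hB0 : B.det ≠ 0 := by rw [hBdet]; exact (sqrt_pos.2 hA.det_pos).ne'
  rw [integral_sub_right_eq_self (fun y => exp (-(y ⬝ᵥ A *ᵥ y) / 2)) m]
  simp_rw [← hB]
  rw [integral_comp_mulVec hB0 (fun z => exp (-(z ⬝ᵥ z) / 2)), integral_exp_neg_dotProduct_self,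
    hBdet, abs_of_nonneg (sqrt_nonneg _), sqrt_eq_rpow, ← rpow_neg hA.det_pos.le, mul_comm]
  norm_num

theorem Matrix.PosDef.integrable_exp_neg_quadForm {A : Matrix ι ι ℝ} (hA : A.PosDef)
    (m : ι → ℝ) :
    Integrable fun y => exp (-((y - m) ⬝ᵥ A *ᵥ (y - m)) / 2) := by
  obtain ⟨B, hBdet, hB⟩ := hA.exists_det_eq_sqrt_and_dotProduct_mulVec
  have hB0 : B.det ≠ 0 := by rw [hBdet]; exact (sqrt_pos.2 hA.det_pos).ne'
  refine Integrable.comp_sub_right (f := fun y => exp (-(y ⬝ᵥ A *ᵥ y) / 2)) ?_ m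
  simp_rw [← hB]
  exact (integrable_comp_mulVec_iff hB0).2 integrable_exp_neg_dotProduct_self

end GaussianIntegral

theorem Matrix.PosSemidef.det_le_pow {ι : Type*} [Fintype ι] [DecidableEq ι] {A : Matrix ι ι ℝ}
    (hA : A.PosSemidef) {c : ℝ} (hc : ∀ μ ∈ spectrum ℝ A, μ ≤ c) :
    A.det ≤ c ^ Fintype.card ι := by
  rw [hA.1.det_eq_prod_eigenvalues]
  calc ∏ i, (hA.1.eigenvalues i : ℝ) ≤ ∏ _i : ι, c :=
        prod_le_prod (fun i _ => hA.eigenvalues_nonneg i)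
          (fun i _ => hc _ (hA.1.eigenvalues_mem_spectrum_real i))
    _ = c ^ Fintype.card ι := by rw [prod_const, card_univ]

section GaussPdf

variable {q : ℕ} {mu : Fin q → ℝ} {S : Matrix (Fin q) (Fin q) ℝ}

theorem continuous_gaussPdf : Continuous (gaussPdf q mu S) := by
  unfold gaussPdf
  simp only [dotProduct, mulVec, Pi.sub_apply]
  fun_prop

theorem gaussPdf_nonneg (hS : S.PosDef) (y : Fin q → ℝ) : 0 ≤ gaussPdf q mu S y := by
  have := hS.det_pos
  unfold gaussPdf
  positivity

theorem gaussPdf_rpow (hS : S.PosDef) (r : ℝ) (y : Fin q → ℝ) :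
    gaussPdf q mu S y ^ r = ((2 * π) ^ (-(q : ℝ) / 2) * S.det ^ (-(1 : ℝ) / 2)) ^ r *
      exp (-((y - mu) ⬝ᵥ (r • S⁻¹) *ᵥ (y - mu)) / 2) := by
  have := hS.det_pos
  rw [gaussPdf, mul_rpow (by positivity) (exp_pos _).le, ← exp_mul, smul_mulVec, dotProduct_smul,
    smul_eq_mul]
  ring_nf

theorem integrable_rpow_gaussPdf (hS : S.PosDef) {r : ℝ} (hr : 0 < r) :
    Integrable fun y => gaussPdf q mu S y ^ r := by
  simp_rw [gaussPdf_rpow hS]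
  exact ((hS.inv.smul hr).integrable_exp_neg_quadForm mu).const_mul _

theorem integral_rpow_gaussPdf (hS : S.PosDef) {r : ℝ} (hr : 0 < r) :
    ∫ y, gaussPdf q mu S y ^ r =
      (2 * π) ^ ((1 - r) * q / 2) * r ^ (-(q : ℝ) / 2) * S.det ^ ((1 - r) / 2) := by
  have hdet := hS.det_pos
  simp_rw [gaussPdf_rpow hS]
  rw [integral_const_mul, (hS.inv.smul hr).integral_exp_neg_quadForm, det_smul, det_nonsing_inv,
    Ring.inverse_eq_inv', Fintype.card_fin]
  refine log_injOn_pos (Set.mem_Ioi.2 (by positivity)) (Set.mem_Ioi.2 (by positivity)) ?_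
  simp (disch := positivity) only [log_mul, log_rpow, log_pow, log_inv]
  ring

theorem integrable_gaussPdf (hS : S.PosDef) : Integrable (gaussPdf q mu S) := by
  simpa using integrable_rpow_gaussPdf (mu := mu) hS one_pos

theorem integral_gaussPdf (hS : S.PosDef) : ∫ y, gaussPdf q mu S y = 1 := by
  simpa using integral_rpow_gaussPdf (mu := mu) hS one_pos

theorem integrable_sq_gaussPdf (hS : S.PosDef) : Integrable fun y => gaussPdf q mu S y ^ 2 := by
  simpa using integrable_rpow_gaussPdf (mu := mu) hS two_pos

theorem integrable_sqrt_gaussPdf (hS : S.PosDef) : Integrable fun y => √(gaussPdf q mu S y) := by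
  simpa [sqrt_eq_rpow] using integrable_rpow_gaussPdf (mu := mu) hS one_half_pos

theorem integral_sq_gaussPdf_le (hS : S.PosDef) {c : ℝ} (hc : 0 < c)
    (hspec : ∀ μ ∈ spectrum ℝ S⁻¹, μ ≤ c) :
    ∫ y, gaussPdf q mu S y ^ 2 ≤ (4 * π) ^ (-(q : ℝ) / 2) * c ^ ((q : ℝ) / 2) := by
  have hdet := hS.det_pos
  have hdet_inv : S.det⁻¹ ≤ c ^ q := by
    simpa [det_nonsing_inv, Ring.inverse_eq_inv'] using hS.inv.posSemidef.det_le_pow hspec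
  have h2π : (2 * π) ^ ((1 - 2) * q / 2 : ℝ) * (2 : ℝ) ^ (-(q : ℝ) / 2) =
      (4 * π) ^ (-(q : ℝ) / 2) := by
    rw [show ((1 : ℝ) - 2) * q / 2 = -(q : ℝ) / 2 by ring, ← mul_rpow (by positivity) (by norm_num)]
    ring_nf
  have hdet_rpow : S.det ^ ((1 - 2) / 2 : ℝ) ≤ c ^ ((q : ℝ) / 2) := by
    calc S.det ^ ((1 - 2) / 2 : ℝ) = S.det⁻¹ ^ (1 / 2 : ℝ) := by
          rw [inv_rpow hdet.le, ← rpow_neg hdet.le]; norm_num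
      _ ≤ (c ^ q) ^ (1 / 2 : ℝ) := rpow_le_rpow (by positivity) hdet_inv (by norm_num)
      _ = c ^ ((q : ℝ) / 2) := by rw [← rpow_natCast, ← rpow_mul hc.le]; ring_nf
  calc ∫ y, gaussPdf q mu S y ^ 2 = ∫ y, gaussPdf q mu S y ^ (2 : ℝ) := by simp_rw [rpow_two]
    _ = (4 * π) ^ (-(q : ℝ) / 2) * S.det ^ ((1 - 2) / 2 : ℝ) := by
      rw [integral_rpow_gaussPdf hS two_pos, h2π]
    _ ≤ (4 * π) ^ (-(q : ℝ) / 2) * c ^ ((q : ℝ) / 2) := by gcongr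

end GaussPdf

theorem Real.abs_log_mul_self_le_two_mul_sqrt_add_sq {t : ℝ} (ht : 0 ≤ t) :
    |log t * t| ≤ 2 * √t + t ^ 2 := by
  rcases ht.eq_or_lt with rfl | ht
  · simp
  rcases le_or_gt t 1 with ht1 | ht1
  · have h := abs_log_mul_self_rpow_lt t (1 / 2) ht ht1 one_half_pos
    rw [← sqrt_eq_rpow] at h
    calc |log t * t| = |log t * √t| * √t := by
          rw [abs_mul, abs_mul, abs_of_nonneg (sqrt_nonneg t), abs_of_pos ht, mul_assoc,
            mul_self_sqrt ht.le]
      _ ≤ 2 * √t := by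
          have := sqrt_nonneg t
          nlinarith
      _ ≤ 2 * √t + t ^ 2 := le_add_of_nonneg_right (sq_nonneg t)
  · have hlog : 0 ≤ log t := log_nonneg ht1.le
    have hlt : log t ≤ t := (log_le_sub_one_of_pos ht).trans (by linarith)
    rw [abs_of_nonneg (by positivity)]
    nlinarith [sqrt_nonneg t]

section Entropy

variable {α : Type*} [MeasurableSpace α] {μ : Measure α} {f : α → ℝ}

theorem integrable_log_mul_self (hf : AEMeasurable f μ) (hf0 : ∀ y, 0 ≤ f y)
    (hsqrt : Integrable (fun y => √(f y)) μ) (hsq : Integrable (fun y => f y ^ 2) μ) :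
    Integrable (fun y => log (f y) * f y) μ :=
  ((hsqrt.const_mul 2).add hsq).mono' ((hf.log.mul hf).aestronglyMeasurable)
    (Filter.Eventually.of_forall fun y => abs_log_mul_self_le_two_mul_sqrt_add_sq (hf0 y))

theorem integral_log_mul_self_le_log (hf0 : ∀ y, 0 ≤ f y) (hf : Integrable f μ)
    (hf1 : ∫ y, f y ∂μ = 1) (hsq : Integrable (fun y => f y ^ 2) μ)
    (hlog : Integrable (fun y => log (f y) * f y) μ) {C : ℝ} (hC : 0 < C)
    (hsqC : ∫ y, f y ^ 2 ∂μ ≤ C) :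
    ∫ y, log (f y) * f y ∂μ ≤ log C := by
  have hpt : ∀ t, 0 ≤ t → log t * t ≤ (log C - 1) * t + t ^ 2 / C := by
    intro t ht
    rcases ht.eq_or_lt with rfl | ht
    · simp
    have h := log_le_sub_one_of_pos (div_pos ht hC)
    rw [log_div ht.ne' hC.ne'] at h
    calc log t * t ≤ (log C + t / C - 1) * t := by gcongr; linarith
      _ = (log C - 1) * t + t ^ 2 / C := by ring
  calc ∫ y, log (f y) * f y ∂μ ≤ ∫ y, (log C - 1) * f y + f y ^ 2 / C ∂μ :=
        integral_mono hlog ((hf.const_mul _).add (hsq.div_const C)) fun y => hpt _ (hf0 y)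
    _ = log C - 1 + (∫ y, f y ^ 2 ∂μ) / C := by
        rw [integral_add (hf.const_mul _) (hsq.div_const C), integral_const_mul, integral_div, hf1,
          mul_one]
    _ ≤ log C := by
        have : (∫ y, f y ^ 2 ∂μ) / C ≤ 1 := (div_le_one hC).2 hsqC
        linarith

end Entropy

section Mixture

variable {ι : Type*} [Fintype ι] {w : ι → ℝ}

theorem sq_sum_mul_le_sum_mul_sq (hw0 : ∀ k, 0 ≤ w k) (hw1 : ∑ k, w k = 1) (a : ι → ℝ) :
    (∑ k, w k * a k) ^ 2 ≤ ∑ k, w k * a k ^ 2 := by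
  simpa [hw1] using sum_sq_le_sum_mul_sum_of_sq_le_mul univ (fun k _ => hw0 k)
    (fun k _ => mul_nonneg (hw0 k) (sq_nonneg (a k))) (r := fun k => w k * a k)
    (fun k _ => le_of_eq (by ring))

theorem sqrt_sum_mul_le_sum_sqrt (hw0 : ∀ k, 0 ≤ w k) (hw1 : ∑ k, w k = 1) {a : ι → ℝ}
    (ha : ∀ k, 0 ≤ a k) : √(∑ k, w k * a k) ≤ ∑ k, √(a k) := by
  rw [sqrt_le_left (sum_nonneg fun k _ => sqrt_nonneg _)]
  have hw_le : ∀ k, w k ≤ 1 := fun k => hw1 ▸ single_le_sum (fun i _ => hw0 i) (mem_univ k)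
  calc ∑ k, w k * a k ≤ ∑ k, a k := sum_le_sum fun k _ => mul_le_of_le_one_left (ha k) (hw_le k)
    _ = ∑ k, √(a k) ^ 2 := by simp_rw [sq_sqrt (ha _)]
    _ ≤ (∑ k, √(a k)) ^ 2 := sum_sq_le_sq_sum_of_nonneg fun k _ => sqrt_nonneg _

end Mixture

namespace SGaMEParam

variable {K p q : ℕ} (ψ : SGaMEParam K p q) (x : Fin p → ℝ)

theorem gate_nonneg (k : Fin K) : 0 ≤ ψ.gate k x :=
  div_nonneg (exp_pos _).le (sum_nonneg fun _ _ => (exp_pos _).le)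

theorem sum_gate (hK : 0 < K) : ∑ k, ψ.gate k x = 1 := by
  simp only [gate, ← sum_div]
  exact div_self (sum_pos (fun _ _ => exp_pos _) ⟨⟨0, hK⟩, mem_univ _⟩).ne'

theorem continuous_density : Continuous (ψ.density x) :=
  continuous_finsetSum _ fun _ _ => continuous_const.mul continuous_gaussPdf

theorem density_nonneg (hS : ∀ k, (ψ.cov k).PosDef) (y : Fin q → ℝ) : 0 ≤ ψ.density x y :=
  sum_nonneg fun k _ => mul_nonneg (ψ.gate_nonneg x k) (gaussPdf_nonneg (hS k) y)

theorem integrable_density (hS : ∀ k, (ψ.cov k).PosDef) : Integrable (ψ.density x) :=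
  integrable_finsetSum _ fun k _ => (integrable_gaussPdf (hS k)).const_mul _

theorem integral_density (hK : 0 < K) (hS : ∀ k, (ψ.cov k).PosDef) :
    ∫ y, ψ.density x y = 1 := by
  simp only [density]
  rw [integral_finsetSum _ fun k _ => (integrable_gaussPdf (hS k)).const_mul _]
  simp [integral_const_mul, integral_gaussPdf (hS _), ψ.sum_gate x hK]

theorem sq_density_le (hK : 0 < K) (y : Fin q → ℝ) :
    ψ.density x y ^ 2 ≤ ∑ k, ψ.gate k x * gaussPdf q (ψ.mean k x) (ψ.cov k) y ^ 2 :=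
  sq_sum_mul_le_sum_mul_sq (ψ.gate_nonneg x) (ψ.sum_gate x hK) _

theorem integrable_sq_density (hK : 0 < K) (hS : ∀ k, (ψ.cov k).PosDef) :
    Integrable fun y => ψ.density x y ^ 2 :=
  (integrable_finsetSum _ fun k _ => (integrable_sq_gaussPdf (hS k)).const_mul _).mono'
    ((ψ.continuous_density x).pow 2).aestronglyMeasurable
    (Filter.Eventually.of_forall fun y => by
      rw [norm_of_nonneg (sq_nonneg _)]
      exact ψ.sq_density_le x hK y)

theorem integral_sq_density_le (hK : 0 < K) (hS : ∀ k, (ψ.cov k).PosDef) {C : ℝ}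
    (hC : ∀ k, ∫ y, gaussPdf q (ψ.mean k x) (ψ.cov k) y ^ 2 ≤ C) :
    ∫ y, ψ.density x y ^ 2 ≤ C := by
  have hint : ∀ k, Integrable fun y => ψ.gate k x * gaussPdf q (ψ.mean k x) (ψ.cov k) y ^ 2 :=
    fun k => (integrable_sq_gaussPdf (hS k)).const_mul _
  calc ∫ y, ψ.density x y ^ 2
      ≤ ∫ y, ∑ k, ψ.gate k x * gaussPdf q (ψ.mean k x) (ψ.cov k) y ^ 2 :=
        integral_mono (ψ.integrable_sq_density x hK hS) (integrable_finsetSum _ fun k _ => hint k)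
          (ψ.sq_density_le x hK)
    _ = ∑ k, ψ.gate k x * ∫ y, gaussPdf q (ψ.mean k x) (ψ.cov k) y ^ 2 := by
        rw [integral_finsetSum _ fun k _ => hint k]
        simp_rw [integral_const_mul]
    _ ≤ ∑ k, ψ.gate k x * C := by gcongr with k; exacts [ψ.gate_nonneg x k, hC k]
    _ = C := by rw [← sum_mul, ψ.sum_gate x hK, one_mul]

theorem integrable_sqrt_density (hK : 0 < K) (hS : ∀ k, (ψ.cov k).PosDef) :
    Integrable fun y => √(ψ.density x y) :=
  (integrable_finsetSum _ fun k _ => integrable_sqrt_gaussPdf (hS k)).mono'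
    (continuous_sqrt.comp (ψ.continuous_density x)).aestronglyMeasurable
    (Filter.Eventually.of_forall fun y => by
      rw [norm_of_nonneg (sqrt_nonneg _)]
      exact sqrt_sum_mul_le_sum_sqrt (ψ.gate_nonneg x) (ψ.sum_gate x hK)
        fun k => gaussPdf_nonneg (hS k) y)

theorem integral_log_mul_density_le (hK : 0 < K) (hS : ∀ k, (ψ.cov k).PosDef) {c : ℝ}
    (hc : 0 < c) (hspec : ∀ k, ∀ μ ∈ spectrum ℝ (ψ.cov k)⁻¹, μ ≤ c) :
    ∫ y, log (ψ.density x y) * ψ.density x y ≤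
      log ((4 * π) ^ (-(q : ℝ) / 2) * c ^ ((q : ℝ) / 2)) :=
  integral_log_mul_self_le_log (ψ.density_nonneg x hS) (ψ.integrable_density x hS)
    (ψ.integral_density x hK hS) (ψ.integrable_sq_density x hK hS)
    (integrable_log_mul_self (ψ.continuous_density x).aemeasurable (ψ.density_nonneg x hS)
      (ψ.integrable_sqrt_density x hK hS) (ψ.integrable_sq_density x hK hS))
    (by positivity)
    (ψ.integral_sq_density_le x hK hS fun k => integral_sq_gaussPdf_le (hS k) hc (hspec k))

end SGaMEParam

theorem sgame_differential_entropy_bound_general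
    (K p q : ℕ) (hK : 1 ≤ K)
    (Agam Abeta aSig ASig : ℝ)
    (hASig : 0 < ASig)
    (ψ0 : SGaMEParam K p q) (hψ0 : InPsiT Agam Abeta aSig ASig ψ0) :
    (∀ x ∈ cube p,
        ∫ y : Fin q → ℝ, Real.log (ψ0.density x y) * ψ0.density x y ≤
          Real.log ((4 * π) ^ (-(q : ℝ) / 2) * ASig ^ ((q : ℝ) / 2))) ∧
      max 0 (⨆ x : cube p,
          ∫ y : Fin q → ℝ, Real.log (ψ0.density (x : Fin p → ℝ) y) * ψ0.density x y) ≤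
        Hs0 q ASig := by
  obtain ⟨hcov, -, -, hspec⟩ := hψ0
  have hbound : ∀ x : Fin p → ℝ, ∫ y, log (ψ0.density x y) * ψ0.density x y ≤
      log ((4 * π) ^ (-(q : ℝ) / 2) * ASig ^ ((q : ℝ) / 2)) := fun x =>
    ψ0.integral_log_mul_density_le x hK (fun k => (hcov k).2) hASig
      fun k μ hμ => (hspec k μ hμ).2
  have : Nonempty (cube p) := ⟨⟨0, Set.left_mem_Icc.2 zero_le_one⟩⟩
  exact ⟨fun x _ => hbound x, max_le_max le_rfl (ciSup_le fun x => hbound x)⟩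

/-- differential entropy bound for the SGaME model. -/
theorem sgame_differential_entropy_bound
    (K p q : ℕ) (hK : 1 ≤ K) (hp : 1 ≤ p) (hq : 1 ≤ q)
    (Agam Abeta aSig ASig : ℝ)
    (hAgam : 0 < Agam) (hAbeta : 0 < Abeta) (haSig : 0 < aSig) (hASig : 0 < ASig)
    (ψ0 : SGaMEParam K p q) (hψ0 : InPsiT Agam Abeta aSig ASig ψ0) :
    (∀ x ∈ cube p,
        ∫ y : Fin q → ℝ, Real.log (ψ0.density x y) * ψ0.density x y ≤
          Real.log ((4 * π) ^ (-(q : ℝ) / 2) * ASig ^ ((q : ℝ) / 2))) ∧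
      max 0 (⨆ x : cube p,
          ∫ y : Fin q → ℝ, Real.log (ψ0.density (x : Fin p → ℝ) y) * ψ0.density x y) ≤
        Hs0 q ASig :=
  sgame_differential_entropy_bound_general K p q hK Agam Abeta aSig ASig hASig ψ0 hψ0
end

section
/- (Discretization of the ℓ1-ball under an empirical design norm). Let δ > 0 and (x_{ij})_{i∈[n], j∈[p]} ∈ ℝ^{np}, and set ‖x‖²_{max,n} = (1/n)Σ_{i=1}^n max_{j∈[p]} x_{ij}². There exists a family B of at most (2p+1)^{‖x‖²_{max,n}/δ²} vectors in ℝ^p such that for every β ∈ ℝ^p with ‖β‖_1 ≤ 1 there exists β' ∈ B with (1/n)Σ_{i=1}^n (Σ_{j=1}^p (β_j − β'_j)·x_{ij})² ≤ δ². -/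
/-!
Maurey's empirical method. A vector `β` of the unit `ℓ¹`-ball is a convex combination of the
`2p + 1` points `0, ±eⱼ`, whose images under the design have squared norm at most
`∑ᵢ maxⱼ xᵢⱼ² = n ‖x‖²_{max,n}`. An average of `S` greedily chosen such points approximates `β`
with empirical squared error at most `(‖x‖²_{max,n} - ‖β‖²_n) / S`. For
`S = ⌊‖x‖²_{max,n} / δ²⌋` this is at most `δ²` unless `‖β‖²_n ≤ δ²`, and then `0`, the average of
`S` copies of the vertex `0`, is close enough; there are at most `(2p + 1)^S` such averages.
-/

open Finset
open scoped RealInnerProductSpace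

section Maurey

variable {E : Type*} [NormedAddCommGroup E] [InnerProductSpace ℝ E] {V : Type*} [Fintype V]
  {μ : V → ℝ}

lemma exists_le_sum_weight_mul (h0 : ∀ v, 0 ≤ μ v) (h1 : ∑ v, μ v = 1) (c : V → ℝ) :
    ∃ v, c v ≤ ∑ v, μ v * c v := by
  obtain ⟨v, -, hv⟩ := (concaveOn_id convex_univ).exists_le_of_centerMass (t := univ)
    (fun v _ => h0 v) (by simp [h1]) (fun v _ => Set.mem_univ (c v))
  exact ⟨v, by simpa [Finset.centerMass_eq_of_sum_1 _ _ h1] using hv⟩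

lemma sum_weight_smul_sub_eq_zero (h1 : ∑ v, μ v = 1) {w : V → E} {y : E}
    (hy : ∑ v, μ v • w v = y) : ∑ v, μ v • (w v - y) = 0 := by
  simp only [smul_sub, Finset.sum_sub_distrib, ← Finset.sum_smul, h1, one_smul, hy, sub_self]

lemma sum_weight_mul_norm_add_sq (h1 : ∑ v, μ v = 1) {z : V → E}
    (hz : ∑ v, μ v • z v = 0) (a : E) :
    ∑ v, μ v * ‖a + z v‖ ^ 2 = ‖a‖ ^ 2 + ∑ v, μ v * ‖z v‖ ^ 2 := by
  have hcross : ∑ v, μ v * (2 * ⟪a, z v⟫) = 0 := by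
    calc ∑ v, μ v * (2 * ⟪a, z v⟫) = 2 * ⟪a, ∑ v, μ v • z v⟫ := by
          simp only [inner_sum, real_inner_smul_right, Finset.mul_sum]
          exact Finset.sum_congr rfl fun v _ => by ring
      _ = 0 := by rw [hz, inner_zero_right, mul_zero]
  simp only [norm_add_sq_real, mul_add, Finset.sum_add_distrib, ← Finset.sum_mul, h1, one_mul,
    hcross, add_zero]

lemma sum_weight_mul_norm_sub_sq (h1 : ∑ v, μ v = 1) {w : V → E} {y : E}
    (hy : ∑ v, μ v • w v = y) :
    ∑ v, μ v * ‖w v - y‖ ^ 2 = ∑ v, μ v * ‖w v‖ ^ 2 - ‖y‖ ^ 2 := by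
  have := sum_weight_mul_norm_add_sq h1 (sum_weight_smul_sub_eq_zero h1 hy) y
  simp only [add_sub_cancel] at this
  linarith

/-- Maurey's empirical method, derandomized: each sample is chosen greedily so that the squared
deviation grows by at most the variance, which the expectation over the next sample guarantees. -/
lemma exists_norm_sum_sub_nsmul_sq_le (h0 : ∀ v, 0 ≤ μ v) (h1 : ∑ v, μ v = 1) {w : V → E}
    {y : E} (hy : ∑ v, μ v • w v = y) (S : ℕ) :
    ∃ g : Fin S → V, ‖∑ t, w (g t) - (S : ℝ) • y‖ ^ 2 ≤ S * ∑ v, μ v * ‖w v - y‖ ^ 2 := by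
  induction S with
  | zero => exact ⟨Fin.elim0, by simp⟩
  | succ S ih =>
    obtain ⟨g, hg⟩ := ih
    set A := ∑ t, w (g t) - (S : ℝ) • y
    have hz := sum_weight_smul_sub_eq_zero h1 hy
    obtain ⟨v, hv⟩ := exists_le_sum_weight_mul h0 h1 fun v => ‖A + (w v - y)‖ ^ 2
    refine ⟨Fin.snoc g v, ?_⟩
    have hstep : ∑ t, w (Fin.snoc (α := fun _ => V) g v t) - ((S + 1 : ℕ) : ℝ) • y
        = A + (w v - y) := by
      simp only [Fin.sum_univ_castSucc, Fin.snoc_castSucc, Fin.snoc_last, A]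
      push_cast
      rw [add_smul, one_smul]
      abel
    rw [hstep]
    calc ‖A + (w v - y)‖ ^ 2 ≤ ∑ v, μ v * ‖A + (w v - y)‖ ^ 2 := hv
      _ = ‖A‖ ^ 2 + ∑ v, μ v * ‖w v - y‖ ^ 2 := sum_weight_mul_norm_add_sq h1 hz A
      _ ≤ _ := by push_cast; linarith

lemma exists_mul_norm_sub_average_sq_le (h0 : ∀ v, 0 ≤ μ v) (h1 : ∑ v, μ v = 1) {w : V → E}
    {y : E} (hy : ∑ v, μ v • w v = y) {r : ℝ} (hw : ∀ v, ‖w v‖ ^ 2 ≤ r) (S : ℕ) :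
    ∃ g : Fin S → V, S * ‖y - (S : ℝ)⁻¹ • ∑ t, w (g t)‖ ^ 2 ≤ r - ‖y‖ ^ 2 := by
  obtain ⟨g, hg⟩ := exists_norm_sum_sub_nsmul_sq_le h0 h1 hy S
  refine ⟨g, ?_⟩
  set C := ∑ v, μ v * ‖w v - y‖ ^ 2
  have hC : C ≤ r - ‖y‖ ^ 2 := by
    have hwr : ∑ v, μ v * ‖w v‖ ^ 2 ≤ r := by
      calc ∑ v, μ v * ‖w v‖ ^ 2 ≤ ∑ v, μ v * r :=
            Finset.sum_le_sum fun v _ => mul_le_mul_of_nonneg_left (hw v) (h0 v)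
        _ = r := by rw [← Finset.sum_mul, h1, one_mul]
    have hvar : C = _ := sum_weight_mul_norm_sub_sq h1 hy
    linarith
  refine le_trans ?_ hC
  rcases Nat.eq_zero_or_pos S with rfl | hS
  · simpa using Finset.sum_nonneg fun v _ => mul_nonneg (h0 v) (sq_nonneg ‖w v - y‖)
  have hS' : (0 : ℝ) < S := by exact_mod_cast hS
  have hrescale :
      y - (S : ℝ)⁻¹ • ∑ t, w (g t) = -((S : ℝ)⁻¹ • (∑ t, w (g t) - (S : ℝ) • y)) := by
    rw [smul_sub, smul_smul, inv_mul_cancel₀ hS'.ne', one_smul, neg_sub]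
  calc (S : ℝ) * ‖y - (S : ℝ)⁻¹ • ∑ t, w (g t)‖ ^ 2
      = (S : ℝ)⁻¹ * ‖∑ t, w (g t) - (S : ℝ) • y‖ ^ 2 := by
        rw [hrescale, norm_neg, norm_smul, norm_inv, Real.norm_natCast]
        field_simp
    _ ≤ (S : ℝ)⁻¹ * (S * C) := by gcongr
    _ = C := by field_simp

end Maurey

section CrossPolytope

variable {p : ℕ}

def crossPolytopeVertex (p : ℕ) : Option (Fin p ⊕ Fin p) → Fin p → ℝ
  | none => 0
  | some (.inl j) => Pi.single j 1
  | some (.inr j) => Pi.single j (-1)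

def crossPolytopeWeight (β : Fin p → ℝ) : Option (Fin p ⊕ Fin p) → ℝ
  | none => 1 - ∑ j, |β j|
  | some (.inl j) => max (β j) 0
  | some (.inr j) => max (-β j) 0

lemma crossPolytopeWeight_nonneg {β : Fin p → ℝ} (hβ : ∑ j, |β j| ≤ 1)
    (v : Option (Fin p ⊕ Fin p)) : 0 ≤ crossPolytopeWeight β v := by
  rcases v with _ | j | j
  · exact sub_nonneg.mpr hβ
  · exact le_max_right _ _
  · exact le_max_right _ _

lemma sum_crossPolytopeWeight (β : Fin p → ℝ) : ∑ v, crossPolytopeWeight β v = 1 := by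
  simp only [Fintype.sum_option, Fintype.sum_sum_type, crossPolytopeWeight,
    ← Finset.sum_add_distrib, max_zero_add_max_neg_zero_eq_abs_self, sub_add_cancel]

lemma sum_crossPolytopeWeight_smul (β : Fin p → ℝ) :
    ∑ v, crossPolytopeWeight β v • crossPolytopeVertex p v = β := by
  ext k
  simp [Fintype.sum_option, Fintype.sum_sum_type, crossPolytopeWeight, crossPolytopeVertex,
    Pi.single_apply, ← sub_eq_add_neg]

end CrossPolytope

section Design

variable {n p : ℕ} (x : Fin n → Fin p → ℝ)

/-- Valued in Euclidean `ℝⁿ`, so that `‖designMap x β‖ ^ 2 / n` is the empirical squared norm. -/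
def designMap : (Fin p → ℝ) →ₗ[ℝ] EuclideanSpace ℝ (Fin n) where
  toFun u := WithLp.toLp 2 fun i => ∑ j, u j * x i j
  map_add' u v := by ext i; simp [add_mul, Finset.sum_add_distrib]
  map_smul' c u := by ext i; simp [Finset.mul_sum, mul_assoc]

lemma norm_designMap_sq (u : Fin p → ℝ) :
    ‖designMap x u‖ ^ 2 = ∑ i, (∑ j, u j * x i j) ^ 2 := by
  simp [EuclideanSpace.norm_sq_eq, designMap]

lemma norm_designMap_crossPolytopeVertex_sq_le (v : Option (Fin p ⊕ Fin p)) :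
    ‖designMap x (crossPolytopeVertex p v)‖ ^ 2 ≤ ∑ i, ⨆ j, x i j ^ 2 := by
  have hle : ∀ i j, x i j ^ 2 ≤ ⨆ k, x i k ^ 2 := fun i j =>
    le_ciSup (f := fun k => x i k ^ 2) (Set.finite_range _).bddAbove j
  rw [norm_designMap_sq]
  rcases v with _ | j | j
  · simpa [crossPolytopeVertex] using
      Finset.sum_nonneg fun i _ => Real.iSup_nonneg fun k => sq_nonneg (x i k)
  all_goals
    refine Finset.sum_le_sum fun i _ => ?_
    simpa [crossPolytopeVertex, Pi.single_apply] using hle i j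

end Design

section MaureyNet

variable {p : ℕ}

noncomputable def maureyNet (p S : ℕ) : Finset (Fin p → ℝ) :=
  univ.image fun g : Fin S → Option (Fin p ⊕ Fin p) =>
    (S : ℝ)⁻¹ • ∑ t, crossPolytopeVertex p (g t)

lemma card_maureyNet_le (S : ℕ) : #(maureyNet p S) ≤ (2 * p + 1) ^ S := by
  refine Finset.card_image_le.trans_eq ?_
  simp [Fintype.card_option, Fintype.card_sum, two_mul]

lemma card_maureyNet_floor_le {e : ℝ} (he : 0 ≤ e) :
    #(maureyNet p ⌊e⌋₊) ≤ ⌈(2 * (p : ℝ) + 1) ^ e⌉₊ := by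
  have hpow : (((2 * p + 1) ^ ⌊e⌋₊ : ℕ) : ℝ) ≤ (2 * (p : ℝ) + 1) ^ e := by
    push_cast
    rw [← Real.rpow_natCast]
    exact Real.rpow_le_rpow_of_exponent_le (by linarith [p.cast_nonneg (α := ℝ)])
      (Nat.floor_le he)
  exact (card_maureyNet_le _).trans (by exact_mod_cast hpow.trans (Nat.le_ceil _))

lemma zero_mem_maureyNet (S : ℕ) : (0 : Fin p → ℝ) ∈ maureyNet p S :=
  Finset.mem_image.mpr ⟨fun _ => none, Finset.mem_univ _, by simp [crossPolytopeVertex]⟩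

lemma exists_mem_maureyNet_mul_norm_designMap_sub_sq_le {n : ℕ} (x : Fin n → Fin p → ℝ)
    {β : Fin p → ℝ} (hβ : ∑ j, |β j| ≤ 1) (S : ℕ) :
    ∃ β' ∈ maureyNet p S,
      S * ‖designMap x (β - β')‖ ^ 2 ≤ (∑ i, ⨆ j, x i j ^ 2) - ‖designMap x β‖ ^ 2 := by
  have hy : ∑ v, crossPolytopeWeight β v • designMap x (crossPolytopeVertex p v) =
      designMap x β := by
    simp only [← map_smul, ← map_sum, sum_crossPolytopeWeight_smul]
  obtain ⟨g, hg⟩ := exists_mul_norm_sub_average_sq_le (crossPolytopeWeight_nonneg hβ)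
    (sum_crossPolytopeWeight β) hy (norm_designMap_crossPolytopeVertex_sq_le x) S
  refine ⟨_, Finset.mem_image_of_mem _ (Finset.mem_univ g), ?_⟩
  rwa [map_sub, map_smul, map_sum]

end MaureyNet

theorem l1_ball_discretization_general
    (n p : ℕ)
    (δ : ℝ) (hδ : 0 < δ)
    (x : Fin n → Fin p → ℝ) :
    ∃ B : Finset (Fin p → ℝ),
      B.card ≤ ⌈(2 * (p : ℝ) + 1) ^
          (((1 / n : ℝ) * ∑ i, ⨆ j, (x i j) ^ 2) / δ ^ 2)⌉₊ ∧
      ∀ β : Fin p → ℝ, (∑ j, |β j|) ≤ 1 →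
        ∃ β' ∈ B, (1 / n : ℝ) * ∑ i, (∑ j, (β j - β' j) * x i j) ^ 2 ≤ δ ^ 2 := by
  set M := (1 / n : ℝ) * ∑ i, ⨆ j, x i j ^ 2
  have hM : 0 ≤ M := mul_nonneg (by positivity)
    (Finset.sum_nonneg fun i _ => Real.iSup_nonneg fun j => sq_nonneg (x i j))
  set S := ⌊M / δ ^ 2⌋₊
  refine ⟨maureyNet p S, card_maureyNet_floor_le (by positivity), fun β hβ => ?_⟩
  have hsum : ∀ β', ∑ i, (∑ j, (β j - β' j) * x i j) ^ 2 = ‖designMap x (β - β')‖ ^ 2 :=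
    fun β' => (norm_designMap_sq x _).symm
  by_cases hq : (1 / n : ℝ) * ‖designMap x β‖ ^ 2 ≤ δ ^ 2
  · exact ⟨0, zero_mem_maureyNet S, by rwa [hsum, sub_zero]⟩
  obtain ⟨β', hβ', hS⟩ := exists_mem_maureyNet_mul_norm_designMap_sub_sq_le x hβ S
  refine ⟨β', hβ', ?_⟩
  have hMS : M < (S + 1) * δ ^ 2 := (div_lt_iff₀ (by positivity)).mp (Nat.lt_floor_add_one _)
  have hlt : (S : ℝ) * ((1 / n : ℝ) * ‖designMap x (β - β')‖ ^ 2) < S * δ ^ 2 := by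
    calc (S : ℝ) * ((1 / n : ℝ) * ‖designMap x (β - β')‖ ^ 2)
        = (1 / n : ℝ) * (S * ‖designMap x (β - β')‖ ^ 2) := by ring
      _ ≤ (1 / n : ℝ) * ((∑ i, ⨆ j, x i j ^ 2) - ‖designMap x β‖ ^ 2) := by gcongr
      _ = M - (1 / n : ℝ) * ‖designMap x β‖ ^ 2 := by ring
      _ < S * δ ^ 2 := by linarith
  rw [hsum]
  exact (lt_of_mul_lt_mul_left hlt S.cast_nonneg).le

/-- discretization of the ℓ1-ball under an empirical design norm,
Lemma 5.9 in Meynet. -/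
theorem l1_ball_discretization
    (n p : ℕ) (hn : 1 ≤ n) (hp : 1 ≤ p)
    (δ : ℝ) (hδ : 0 < δ)
    (x : Fin n → Fin p → ℝ) :
    ∃ B : Finset (Fin p → ℝ),
      B.card ≤ ⌈(2 * (p : ℝ) + 1) ^
          (((1 / n : ℝ) * ∑ i, ⨆ j, (x i j) ^ 2) / δ ^ 2)⌉₊ ∧
      ∀ β : Fin p → ℝ, (∑ j, |β j|) ≤ 1 →
        ∃ β' ∈ B, (1 / n : ℝ) * ∑ i, (∑ j, (β j - β' j) * x i j) ^ 2 ≤ δ ^ 2 :=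
  l1_ball_discretization_general n p δ hδ x
end

section
/- (Uniform bound on the gradient of the log-density). For every x ∈ [0,1]^p, every ψ ∈ Ψ̃, every y ∈ ℝ^q, and every k ∈ [K], each of the following partial derivatives of the map ψ ↦ ln s_ψ(y|x) has absolute value at most G(y) = max(A_Σ, 1+K·A_G)·(1 + q√q·(‖y‖_∞ + A_β)²·A_Σ): the derivative with respect to γ_{k0}; with respect to the scalar γ_kᵀx; with respect to each component of β_{k0}; with respect to each component of β_k x; and with respect to each entry of Σ_k. Explicitly: |∂ ln s_ψ(y|x)/∂γ_{k0}| = |∂ ln s_ψ(y|x)/∂(γ_kᵀx)| ≤ 1 + K·A_G; ‖∂ ln s_ψ(y|x)/∂β_{k0}‖_∞ = ‖∂ ln s_ψ(y|x)/∂(β_k x)‖_∞ ≤ √q·A_Σ·(‖y‖_∞ + A_β); and each |∂ ln s_ψ(y|x)/∂[Σ_k]_{z₁,z₂}| ≤ (1/2)·(A_Σ + q√q·(‖y‖_∞ + A_β)²·A_Σ²). -/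
open MeasureTheory Real Finset ProbabilityTheory

noncomputable section

/-- Mixture of Gaussian experts density written in terms of the gating logits `w`,
the expert means `mu` and the expert covariances `S`. -/
def sgameAux (K q : ℕ) (w : Fin K → ℝ) (mu : Fin K → Fin q → ℝ)
    (S : Fin K → Matrix (Fin q) (Fin q) ℝ) (y : Fin q → ℝ) : ℝ :=
  ∑ k, (Real.exp (w k) / ∑ l, Real.exp (w l)) * gaussPdf q (mu k) (S k) y

end

/-!
Each partial derivative of `log s_ψ(y|x)` along a parameter of expert `k` has the form `τ_k * D`,
where `τ_k = g_k φ_k / s_ψ ∈ [0, 1]` is the posterior weight of expert `k` and `D` is the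
logarithmic derivative of its Gaussian density `φ_k`; along the gating logit it is
`τ_k - g_k ∈ [-1, 1]`. For a coordinate of the mean, `D = (Σ_k⁻¹ (y - μ_k))_z`; for an entry of
the covariance, Jacobi's formula and `d(S⁻¹) = -S⁻¹ dS S⁻¹` give
`D = (-(Σ_k⁻¹)_{ji} + (Σ_k⁻¹ (y - μ_k))_i (Σ_k⁻¹ (y - μ_k))_j) / 2`. Both are bounded by the
Cauchy–Schwarz inequality for the positive semidefinite form of `Σ_k⁻¹`, whose spectrum lies
below `A_Σ`, since every coordinate of `y - μ_k` is at most `‖y‖ + A_β` in absolute value.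
Shifting `γ_{k0}` or `γ_kᵀx` (resp. `β_{k0}` or `β_k x`) moves the same logit (resp. mean
coordinate), so the two derivatives coincide.
-/

open Matrix

namespace Matrix

variable {n : Type*}

lemma of_ite_eq_add_smul_single [DecidableEq n] (S : Matrix n n ℝ) (i j : n) (t : ℝ) :
    (of fun a b => if a = i ∧ b = j then t else S a b) = S + (t - S i j) • single i j 1 := by
  ext a b
  by_cases h : a = i ∧ b = j
  · obtain ⟨rfl, rfl⟩ := h
    simp
  · have h' : ¬(i = a ∧ j = b) := fun h' => h ⟨h'.1.symm, h'.2.symm⟩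
    simp [h, h']

variable [Fintype n]

lemma dotProduct_mulVec_comm_of_isSymm {M : Matrix n n ℝ} (hM : M.IsSymm) (u v : n → ℝ) :
    u ⬝ᵥ M *ᵥ v = v ⬝ᵥ M *ᵥ u := by
  rw [dotProduct_mulVec, ← vecMul_transpose, hM.eq, dotProduct_comm]

lemma vecMul_eq_mulVec_of_isSymm {M : Matrix n n ℝ} (hM : M.IsSymm) (u : n → ℝ) :
    u ᵥ* M = M *ᵥ u := by
  rw [← mulVec_transpose, hM.eq]

lemma dotProduct_self_le_card_mul_sq {v : n → ℝ} {B : ℝ} (hv : ∀ a, |v a| ≤ B) :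
    v ⬝ᵥ v ≤ Fintype.card n * B ^ 2 := by
  calc v ⬝ᵥ v = ∑ a, |v a| ^ 2 := by simp [dotProduct, sq]
    _ ≤ ∑ _a : n, B ^ 2 :=
      Finset.sum_le_sum fun a _ => pow_le_pow_left₀ (abs_nonneg _) (hv a) 2
    _ = Fintype.card n * B ^ 2 := by simp

lemma PosSemidef.dotProduct_mulVec_sq_le {M : Matrix n n ℝ} (hM : M.PosSemidef) (u v : n → ℝ) :
    (u ⬝ᵥ M *ᵥ v) ^ 2 ≤ (u ⬝ᵥ M *ᵥ u) * (v ⬝ᵥ M *ᵥ v) := by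
  let _ := M.toSeminormedAddCommGroup hM
  let _ := M.toInnerProductSpace hM
  have := real_inner_mul_inner_self_le u v
  change (M *ᵥ v) ⬝ᵥ star u * ((M *ᵥ v) ⬝ᵥ star u) ≤
    (M *ᵥ u) ⬝ᵥ star u * ((M *ᵥ v) ⬝ᵥ star v) at this
  simpa [sq, dotProduct_comm] using this

variable [DecidableEq n]

lemma adjugate_div_det_eq_inv_apply (S : Matrix n n ℝ) (i j : n) :
    S.adjugate j i / S.det = S⁻¹ j i := by
  rw [inv_def, smul_apply, smul_eq_mul, Ring.inverse_eq_inv', div_eq_inv_mul]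

lemma dotProduct_mul_single_mul_mulVec (A B : Matrix n n ℝ) (u v : n → ℝ) (i j : n) :
    u ⬝ᵥ (A * single i j 1 * B) *ᵥ v = (u ᵥ* A) i * (B *ᵥ v) j := by
  rw [← mulVec_mulVec, ← mulVec_mulVec, dotProduct_mulVec, single_mulVec, one_mul]
  exact dotProduct_single _ _ _

lemma det_add_smul_single (S : Matrix n n ℝ) (i j : n) (c : ℝ) :
    (S + c • single i j 1).det = S.det + c * S.adjugate j i := by
  have hrow : S + c • single i j 1 = S.updateRow i (S i + c • Pi.single j 1) := by
    ext a b
    rcases eq_or_ne a i with rfl | ha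
    · rcases eq_or_ne b j with rfl | hb
      · simp
      · simp [Ne.symm hb]
    · simp [ha, Ne.symm ha]
  rw [hrow, det_updateRow_add, det_updateRow_smul, updateRow_eq_self, ← adjugate_apply]

open scoped MatrixOrder in
lemma IsHermitian.dotProduct_mulVec_le_of_spectrum_le {M : Matrix n n ℝ} (hM : M.IsHermitian)
    {A : ℝ} (hA : ∀ μ ∈ spectrum ℝ M, μ ≤ A) (w : n → ℝ) : w ⬝ᵥ M *ᵥ w ≤ A * (w ⬝ᵥ w) := by
  have hle : M ≤ algebraMap ℝ _ A := le_algebraMap_of_spectrum_le hA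
  simpa [Algebra.algebraMap_eq_smul_one, sub_mulVec, smul_mulVec, dotProduct_sub, sub_nonneg]
    using (le_iff.mp hle).dotProduct_mulVec_nonneg w

namespace PosSemidef

variable {M : Matrix n n ℝ} {A : ℝ}

lemma dotProduct_mulVec_sq_le_of_spectrum_le (hM : M.PosSemidef)
    (hA : ∀ μ ∈ spectrum ℝ M, μ ≤ A) (u v : n → ℝ) :
    (u ⬝ᵥ M *ᵥ v) ^ 2 ≤ A ^ 2 * (u ⬝ᵥ u) * (v ⬝ᵥ v) := by
  have hu := hM.1.dotProduct_mulVec_le_of_spectrum_le hA u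
  have hv := hM.1.dotProduct_mulVec_le_of_spectrum_le hA v
  have hu₀ : 0 ≤ u ⬝ᵥ M *ᵥ u := by simpa using hM.dotProduct_mulVec_nonneg u
  have hv₀ : 0 ≤ v ⬝ᵥ M *ᵥ v := by simpa using hM.dotProduct_mulVec_nonneg v
  calc (u ⬝ᵥ M *ᵥ v) ^ 2 ≤ (u ⬝ᵥ M *ᵥ u) * (v ⬝ᵥ M *ᵥ v) := hM.dotProduct_mulVec_sq_le u v
    _ ≤ (A * (u ⬝ᵥ u)) * (A * (v ⬝ᵥ v)) := mul_le_mul hu hv hv₀ (hu₀.trans hu)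
    _ = A ^ 2 * (u ⬝ᵥ u) * (v ⬝ᵥ v) := by ring

lemma nonneg_of_spectrum_le (hM : M.PosSemidef) (hA : ∀ μ ∈ spectrum ℝ M, μ ≤ A) (a : n) :
    0 ≤ A := by
  have := hM.1.dotProduct_mulVec_le_of_spectrum_le hA (Pi.single a 1)
  simp only [mulVec_single, MulOpposite.op_one, one_smul, single_dotProduct, col_apply, one_mul,
    dotProduct_single, Pi.single_eq_same, mul_one] at this
  linarith [hM.diag_nonneg (i := a)]

lemma abs_apply_le_of_spectrum_le (hM : M.PosSemidef) (hA : ∀ μ ∈ spectrum ℝ M, μ ≤ A)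
    (a b : n) : |M a b| ≤ A := by
  have := hM.dotProduct_mulVec_sq_le_of_spectrum_le hA (Pi.single a 1) (Pi.single b 1)
  simp only [mulVec_single, MulOpposite.op_one, one_smul, single_dotProduct, col_apply, one_mul,
    dotProduct_single, Pi.single_eq_same, mul_one] at this
  exact abs_le_of_sq_le_sq this (hM.nonneg_of_spectrum_le hA a)

lemma abs_mulVec_apply_le_of_spectrum_le (hM : M.PosSemidef) (hA : ∀ μ ∈ spectrum ℝ M, μ ≤ A)
    {v : n → ℝ} {B : ℝ} (hv : ∀ a, |v a| ≤ B) (z : n) :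
    |(M *ᵥ v) z| ≤ √(Fintype.card n) * A * B := by
  have hsq := hM.dotProduct_mulVec_sq_le_of_spectrum_le hA (Pi.single z 1) v
  simp only [single_dotProduct, one_mul, dotProduct_single, Pi.single_eq_same, mul_one] at hsq
  have hA₀ := hM.nonneg_of_spectrum_le hA z
  have hB₀ : 0 ≤ B := (abs_nonneg _).trans (hv z)
  refine abs_le_of_sq_le_sq ?_ (by positivity)
  calc ((M *ᵥ v) z) ^ 2 ≤ A ^ 2 * (v ⬝ᵥ v) := hsq
    _ ≤ A ^ 2 * (Fintype.card n * B ^ 2) := by gcongr; exact dotProduct_self_le_card_mul_sq hv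
    _ = (√(Fintype.card n) * A * B) ^ 2 := by
      rw [mul_pow, mul_pow, Real.sq_sqrt (Nat.cast_nonneg _)]; ring

end PosSemidef

end Matrix

section Calculus

variable {n : Type*} [Fintype n]

lemma HasDerivAt.dotProduct {c d : ℝ → n → ℝ} {c' d' : n → ℝ} {t : ℝ}
    (hc : HasDerivAt c c' t) (hd : HasDerivAt d d' t) :
    HasDerivAt (fun s => c s ⬝ᵥ d s) (c' ⬝ᵥ d t + c t ⬝ᵥ d') t :=
  (HasDerivAt.fun_sum (u := Finset.univ) fun i _ =>
    (hasDerivAt_pi.1 hc i).mul (hasDerivAt_pi.1 hd i)).congr_deriv Finset.sum_add_distrib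

lemma HasDerivAt.mulVec {c : ℝ → n → ℝ} {c' : n → ℝ} {t : ℝ} (M : Matrix n n ℝ)
    (hc : HasDerivAt c c' t) : HasDerivAt (fun s => M *ᵥ c s) (M *ᵥ c') t :=
  hasDerivAt_pi.2 fun i =>
    HasDerivAt.fun_sum (u := Finset.univ) fun j _ => (hasDerivAt_pi.1 hc j).const_mul (M i j)

-- Any Banach-algebra norm on matrices gives access to `hasFDerivAt_ringInverse`;
-- the statement itself involves no norm on matrices.
attribute [local instance] Matrix.linftyOpNormedRing Matrix.linftyOpNormedAlgebra in
lemma hasDerivAt_dotProduct_inv_add_smul_mulVec [DecidableEq n] {S : Matrix n n ℝ}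
    (hS : IsUnit S.det) (E : Matrix n n ℝ) (u v : n → ℝ) :
    HasDerivAt (fun t : ℝ => u ⬝ᵥ (S + t • E)⁻¹ *ᵥ v) (-(u ⬝ᵥ (S⁻¹ * E * S⁻¹) *ᵥ v)) 0 := by
  have hU : IsUnit S := (isUnit_iff_isUnit_det S).mpr hS
  let L : Matrix n n ℝ →ₗ[ℝ] ℝ :=
    { toFun := fun A => u ⬝ᵥ A *ᵥ v
      map_add' := by simp [add_mulVec, dotProduct_add]
      map_smul' := by simp [smul_mulVec, dotProduct_smul] }
  have hpath : HasDerivAt (fun t : ℝ => S + t • E) E 0 :=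
    (((hasDerivAt_id (0 : ℝ)).smul_const E).const_add S).congr_deriv (one_smul ℝ E)
  have hinv := (hasFDerivAt_ringInverse (𝕜 := ℝ) hU.unit).comp_hasDerivAt_of_eq 0 hpath (by simp)
  have hfun : (fun t : ℝ => u ⬝ᵥ (S + t • E)⁻¹ *ᵥ v) =
      L.toContinuousLinearMap ∘ Ring.inverse ∘ fun t => S + t • E := by
    funext t
    simp [L, nonsing_inv_eq_ringInverse]
  rw [hfun]
  refine (L.toContinuousLinearMap.hasFDerivAt.comp_hasDerivAt 0 hinv).congr_deriv ?_
  simp only [coe_units_inv, IsUnit.unit_spec, nonsing_inv_eq_ringInverse, _root_.neg_apply,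
    ContinuousLinearMap.mulLeftRight_apply, L]
  exact map_neg L.toContinuousLinearMap _

end Calculus

section Gaussian

variable {q : ℕ}

lemma gaussPdf_pos {S : Matrix (Fin q) (Fin q) ℝ} (hS : 0 < S.det) (m y : Fin q → ℝ) :
    0 < gaussPdf q m S y := by
  unfold gaussPdf
  positivity

lemma HasDerivAt.gaussPdf {m : ℝ → Fin q → ℝ} {S : ℝ → Matrix (Fin q) (Fin q) ℝ}
    {y : Fin q → ℝ} {d Q t : ℝ} (hdet : HasDerivAt (fun s => (S s).det) d t)
    (hdet₀ : (S t).det ≠ 0)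
    (hquad : HasDerivAt (fun s => (y - m s) ⬝ᵥ (S s)⁻¹ *ᵥ (y - m s)) Q t) :
    HasDerivAt (fun s => gaussPdf q (m s) (S s) y)
      (gaussPdf q (m t) (S t) y * (-(d / (S t).det + Q) / 2)) t := by
  have h := ((hdet.rpow_const (p := -(1 : ℝ) / 2) (Or.inl hdet₀)).fun_mul
    (hquad.fun_neg.div_const 2).exp).const_mul ((2 * π) ^ (-(q : ℝ) / 2))
  simp only [← mul_assoc] at h
  refine h.congr_deriv ?_
  rw [Real.rpow_sub_one hdet₀]
  unfold _root_.gaussPdf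
  field_simp
  ring

lemma hasDerivAt_gaussPdf_update_mean {S : Matrix (Fin q) (Fin q) ℝ} (hS : S.IsSymm)
    (hdet : S.det ≠ 0) (m y : Fin q → ℝ) (z : Fin q) :
    HasDerivAt (fun u => gaussPdf q (Function.update m z u) S y)
      (gaussPdf q m S y * (S⁻¹ *ᵥ (y - m)) z) (m z) := by
  have hc : HasDerivAt (fun u => y - Function.update m z u) (-Pi.single z 1) (m z) :=
    (hasDerivAt_update m z (m z)).const_sub y
  have h := (hasDerivAt_const (m z) S.det).gaussPdf hdet (hc.dotProduct (hc.mulVec S⁻¹))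
  simp only [Function.update_eq_self] at h
  refine h.congr_deriv ?_
  rw [dotProduct_mulVec_comm_of_isSymm hS.inv (y - m)]
  simp

lemma hasDerivAt_gaussPdf_update_entry {S : Matrix (Fin q) (Fin q) ℝ} (hS : S.IsSymm)
    (hdet : S.det ≠ 0) (m y : Fin q → ℝ) (i j : Fin q) :
    HasDerivAt (fun t => gaussPdf q m (of fun a b => if a = i ∧ b = j then t else S a b) y)
      (gaussPdf q m S y *
        ((-S⁻¹ j i + (S⁻¹ *ᵥ (y - m)) i * (S⁻¹ *ᵥ (y - m)) j) / 2)) (S i j) := by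
  simp_rw [of_ite_eq_add_smul_single]
  have hdet' : HasDerivAt (fun t => (S + (t - S i j) • single i j 1).det)
      (S.adjugate j i) (S i j) := by
    simp_rw [det_add_smul_single]
    simpa using
      (((hasDerivAt_id (S i j)).sub_const (S i j)).mul_const (S.adjugate j i)).const_add S.det
  have hquad := HasDerivAt.comp_sub_const (S i j) (S i j)
    (f := fun t => (y - m) ⬝ᵥ (S + t • single i j 1)⁻¹ *ᵥ (y - m))
    (by rw [sub_self]; exact hasDerivAt_dotProduct_inv_add_smul_mulVec hdet.isUnit _ _ _)
  have h := hdet'.gaussPdf (m := fun _ => m) (y := y) (by simpa using hdet) hquad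
  simp only [sub_self, zero_smul, add_zero] at h
  refine h.congr_deriv ?_
  rw [adjugate_div_det_eq_inv_apply, dotProduct_mul_single_mul_mulVec,
    vecMul_eq_mulVec_of_isSymm hS.inv]
  ring

end Gaussian

section Mixture

variable {ι : Type*} [Fintype ι]

lemma exp_div_sum_exp_pos (w : ι → ℝ) (l : ι) : 0 < Real.exp (w l) / ∑ j, Real.exp (w j) :=
  div_pos (Real.exp_pos _) (Finset.sum_pos (fun _ _ => Real.exp_pos _) ⟨l, Finset.mem_univ l⟩)

lemma div_sum_mem_Icc {f : ι → ℝ} (hf : ∀ l, 0 ≤ f l) (k : ι) :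
    f k / ∑ l, f l ∈ Set.Icc (0 : ℝ) 1 :=
  ⟨div_nonneg (hf k) (Finset.sum_nonneg fun l _ => hf l),
    div_le_one_of_le₀ (Finset.single_le_sum (fun l _ => hf l) (Finset.mem_univ k))
      (Finset.sum_nonneg fun l _ => hf l)⟩

lemma abs_div_sum_mul_le {f : ι → ℝ} (hf : ∀ l, 0 ≤ f l) (k : ι) (D : ℝ) :
    |f k / (∑ l, f l) * D| ≤ |D| := by
  have h := div_sum_mem_Icc hf k
  rw [abs_mul, abs_of_nonneg h.1]
  exact mul_le_of_le_one_left (abs_nonneg D) h.2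

variable [DecidableEq ι]

lemma sum_mul_update_eq (c a : ι → ℝ) (k : ι) (v : ℝ) :
    ∑ l, c l * Function.update a k v l = c k * v + ∑ l ∈ Finset.univ.erase k, c l * a l := by
  rw [← Finset.add_sum_erase _ _ (Finset.mem_univ k), Function.update_self]
  congr 1
  exact Finset.sum_congr rfl fun l hl => by rw [Function.update_of_ne (Finset.ne_of_mem_erase hl)]

lemma hasDerivAt_log_sum_mul_update {c a : ι → ℝ} {k : ι} {f : ℝ → ℝ} {D t : ℝ}
    (hs : 0 < ∑ l, c l * a l) (hf : HasDerivAt f (a k * D) t) (hft : f t = a k) :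
    HasDerivAt (fun s => Real.log (∑ l, c l * Function.update a k (f s) l))
      (c k * a k / (∑ l, c l * a l) * D) t := by
  have hsum : ∑ l, c l * a l = c k * f t + ∑ l ∈ Finset.univ.erase k, c l * a l := by
    rw [← sum_mul_update_eq, hft, Function.update_eq_self]
  simp_rw [sum_mul_update_eq]
  refine (((hf.const_mul (c k)).add_const _).log (hsum ▸ hs.ne')).congr_deriv ?_
  rw [← hsum]
  ring

end Mixture

section SGaME

variable {K q : ℕ} {w : Fin K → ℝ} {mu : Fin K → Fin q → ℝ}
  {S : Fin K → Matrix (Fin q) (Fin q) ℝ} {y : Fin q → ℝ}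

-- The factor `1` puts the denominator in the shape of `hasDerivAt_log_sum_mul_update`.
lemma sgameAux_eq_div (w : Fin K → ℝ) (mu : Fin K → Fin q → ℝ)
    (S : Fin K → Matrix (Fin q) (Fin q) ℝ) (y : Fin q → ℝ) :
    sgameAux K q w mu S y =
      (∑ l, gaussPdf q (mu l) (S l) y * Real.exp (w l)) / ∑ l, 1 * Real.exp (w l) := by
  simp only [sgameAux, one_mul, Finset.sum_div]
  exact Finset.sum_congr rfl fun l _ => by ring

lemma sgameAux_eq_sum_mul_update {mu' : Fin K → Fin q → ℝ}
    {S' : Fin K → Matrix (Fin q) (Fin q) ℝ} (k : Fin K) (hmu : ∀ l ≠ k, mu' l = mu l)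
    (hS : ∀ l ≠ k, S' l = S l) :
    sgameAux K q w mu' S' y =
      ∑ l, Real.exp (w l) / (∑ j, Real.exp (w j)) *
        Function.update (fun l => gaussPdf q (mu l) (S l) y) k (gaussPdf q (mu' k) (S' k) y) l := by
  refine Finset.sum_congr rfl fun l _ => ?_
  rcases eq_or_ne l k with rfl | h
  · simp
  · simp [Function.update_of_ne h, hmu l h, hS l h]

lemma exp_div_sum_exp_mul_gaussPdf_pos (hS : ∀ l, 0 < (S l).det) (l : Fin K) :
    0 < Real.exp (w l) / (∑ j, Real.exp (w j)) * gaussPdf q (mu l) (S l) y :=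
  mul_pos (exp_div_sum_exp_pos w l) (gaussPdf_pos (hS l) _ _)

lemma abs_deriv_log_sgameAux_update_logit_le (hS : ∀ l, 0 < (S l).det) (k : Fin K) :
    |deriv (fun u => Real.log (sgameAux K q (Function.update w k u) mu S y)) (w k)| ≤ 1 := by
  set a := fun l => gaussPdf q (mu l) (S l) y
  set e := fun l => Real.exp (w l)
  have ha : ∀ l, 0 < a l := fun l => gaussPdf_pos (hS l) _ _
  have hexp : HasDerivAt Real.exp (e k * 1) (w k) :=
    (Real.hasDerivAt_exp _).congr_deriv (mul_one _).symm
  have hnum := hasDerivAt_log_sum_mul_update (c := a) (k := k)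
    (Finset.sum_pos (fun l _ => mul_pos (ha l) (Real.exp_pos _)) ⟨k, Finset.mem_univ k⟩) hexp rfl
  have hden := hasDerivAt_log_sum_mul_update (c := fun _ => (1 : ℝ)) (k := k)
    (Finset.sum_pos (fun l _ => mul_pos one_pos (Real.exp_pos _)) ⟨k, Finset.mem_univ k⟩) hexp rfl
  have hfun : (fun u => Real.log (sgameAux K q (Function.update w k u) mu S y)) =
      fun u => Real.log (∑ l, a l * Function.update e k (Real.exp u) l) -
        Real.log (∑ l, 1 * Function.update e k (Real.exp u) l) := by
    funext u
    have hpos : ∀ c : Fin K → ℝ, (∀ l, 0 < c l) →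
        0 < ∑ l, c l * Real.exp (Function.update w k u l) := fun c hc =>
      Finset.sum_pos (fun l _ => mul_pos (hc l) (Real.exp_pos _)) ⟨k, Finset.mem_univ k⟩
    rw [sgameAux_eq_div, Real.log_div (hpos _ ha).ne' (hpos _ fun _ => one_pos).ne']
    simp only [a, e, Function.apply_update (fun _ => Real.exp)]
  rw [hfun, (hnum.fun_sub hden).deriv, mul_one, mul_one]
  have h₁ := div_sum_mem_Icc (f := fun l => a l * e l)
    (fun l => (mul_pos (ha l) (Real.exp_pos _)).le) k
  have h₂ := div_sum_mem_Icc (f := fun l => 1 * e l)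
    (fun l => (mul_pos one_pos (Real.exp_pos _)).le) k
  rw [abs_sub_le_iff]
  constructor <;> linarith [h₁.1, h₁.2, h₂.1, h₂.2]

lemma abs_deriv_log_sgameAux_update_mean_le (hS : ∀ l, 0 < (S l).det) (k : Fin K)
    (hk : (S k).IsSymm) (z : Fin q) :
    |deriv (fun u => Real.log (sgameAux K q w
        (Function.update mu k (Function.update (mu k) z u)) S y)) (mu k z)| ≤
      |((S k)⁻¹ *ᵥ (y - mu k)) z| := by
  have hd := hasDerivAt_log_sum_mul_update (a := fun l => gaussPdf q (mu l) (S l) y) (k := k)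
    (Finset.sum_pos (fun l _ => exp_div_sum_exp_mul_gaussPdf_pos (w := w) hS l)
      ⟨k, Finset.mem_univ k⟩)
    (hasDerivAt_gaussPdf_update_mean hk (hS k).ne' (mu k) y z) (by rw [Function.update_eq_self])
  have hfun : (fun u => Real.log (sgameAux K q w
      (Function.update mu k (Function.update (mu k) z u)) S y)) = fun u => Real.log (∑ l,
        Real.exp (w l) / (∑ j, Real.exp (w j)) *
          Function.update (fun l => gaussPdf q (mu l) (S l) y) k
            (gaussPdf q (Function.update (mu k) z u) (S k) y) l) := by
    funext u
    rw [sgameAux_eq_sum_mul_update k (fun l hl => Function.update_of_ne hl _ _) (fun _ _ => rfl),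
      Function.update_self]
  rw [hfun, hd.deriv]
  exact abs_div_sum_mul_le (fun l => (exp_div_sum_exp_mul_gaussPdf_pos hS l).le) k _

lemma abs_deriv_log_sgameAux_update_entry_le (hS : ∀ l, 0 < (S l).det) (k : Fin K)
    (hk : (S k).IsSymm) (i j : Fin q) :
    |deriv (fun t => Real.log (sgameAux K q w mu (Function.update S k
        (of fun a b => if a = i ∧ b = j then t else S k a b)) y)) (S k i j)| ≤
      |(-(S k)⁻¹ j i + ((S k)⁻¹ *ᵥ (y - mu k)) i * ((S k)⁻¹ *ᵥ (y - mu k)) j) / 2| := by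
  have hd := hasDerivAt_log_sum_mul_update (a := fun l => gaussPdf q (mu l) (S l) y) (k := k)
    (Finset.sum_pos (fun l _ => exp_div_sum_exp_mul_gaussPdf_pos (w := w) hS l)
      ⟨k, Finset.mem_univ k⟩)
    (hasDerivAt_gaussPdf_update_entry hk (hS k).ne' (mu k) y i j)
    (by rw [of_ite_eq_add_smul_single, sub_self, zero_smul, add_zero])
  have hfun : (fun t => Real.log (sgameAux K q w mu (Function.update S k
      (of fun a b => if a = i ∧ b = j then t else S k a b)) y)) = fun t => Real.log (∑ l,
        Real.exp (w l) / (∑ j, Real.exp (w j)) *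
          Function.update (fun l => gaussPdf q (mu l) (S l) y) k
            (gaussPdf q (mu k) (of fun a b => if a = i ∧ b = j then t else S k a b) y) l) := by
    funext t
    rw [sgameAux_eq_sum_mul_update k (fun _ _ => rfl) (fun l hl => Function.update_of_ne hl _ _),
      Function.update_self]
  rw [hfun, hd.deriv]
  exact abs_div_sum_mul_le (fun l => (exp_div_sum_exp_mul_gaussPdf_pos hS l).le) k _

end SGaME

namespace SGaMEParam

variable {K p q : ℕ} (ψ : SGaMEParam K p q) (x : Fin p → ℝ) (y : Fin q → ℝ) (k : Fin K)

lemma density_eq_sgameAux :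
    ψ.density x y = sgameAux K q (fun l => ψ.logit l x) (fun l => ψ.mean l x) ψ.cov y := rfl

lemma logit_update_g0 (t : ℝ) :
    (fun l => ({ ψ with g0 := Function.update ψ.g0 k t } : SGaMEParam K p q).logit l x) =
      Function.update (fun l => ψ.logit l x) k (t + ∑ j, ψ.g k j * x j) := by
  funext l
  rcases eq_or_ne l k with rfl | h
  · simp [logit]
  · simp [logit, Function.update_of_ne h]

lemma mean_update_b0 (z : Fin q) (t : ℝ) :
    (fun l => ({ ψ with b0 := Function.update ψ.b0 k (Function.update (ψ.b0 k) z t) } :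
        SGaMEParam K p q).mean l x) =
      Function.update (fun l => ψ.mean l x) k
        (Function.update (ψ.mean k x) z (t + (ψ.b k *ᵥ x) z)) := by
  funext l a
  rcases eq_or_ne l k with rfl | h
  · rcases eq_or_ne a z with rfl | ha
    · simp [mean]
    · simp [mean, Function.update_of_ne ha]
  · simp [mean, Function.update_of_ne h]

lemma deriv_log_density_update_g0 :
    deriv (fun t => Real.log (density { ψ with g0 := Function.update ψ.g0 k t } x y)) (ψ.g0 k) =
      deriv (fun u => Real.log (sgameAux K q (Function.update (fun l => ψ.logit l x) k u)
        (fun l => ψ.mean l x) ψ.cov y)) (ψ.logit k x) := by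
  set F := fun u => Real.log (sgameAux K q (Function.update (fun l => ψ.logit l x) k u)
    (fun l => ψ.mean l x) ψ.cov y)
  have hfun : (fun t => Real.log (density { ψ with g0 := Function.update ψ.g0 k t } x y)) =
      fun t => F (t + ∑ j, ψ.g k j * x j) := by
    simp_rw [density_eq_sgameAux, logit_update_g0]
    rfl
  rw [hfun, deriv_comp_add_const]
  rfl

lemma deriv_log_density_update_b0 (z : Fin q) :
    deriv (fun t => Real.log (density
        { ψ with b0 := Function.update ψ.b0 k (Function.update (ψ.b0 k) z t) } x y)) (ψ.b0 k z) =
      deriv (fun u => Real.log (sgameAux K q (fun l => ψ.logit l x)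
        (Function.update (fun l => ψ.mean l x) k (Function.update (ψ.mean k x) z u)) ψ.cov y))
        (ψ.mean k x z) := by
  set F := fun u => Real.log (sgameAux K q (fun l => ψ.logit l x)
    (Function.update (fun l => ψ.mean l x) k (Function.update (ψ.mean k x) z u)) ψ.cov y)
  have hfun : (fun t => Real.log (density
      { ψ with b0 := Function.update ψ.b0 k (Function.update (ψ.b0 k) z t) } x y)) =
      fun t => F (t + (ψ.b k *ᵥ x) z) := by
    simp_rw [density_eq_sgameAux, mean_update_b0]
    rfl
  rw [hfun, deriv_comp_add_const]
  rfl

lemma deriv_log_density_update_cov (i j : Fin q) (C : Matrix (Fin q) (Fin q) ℝ) (t₀ : ℝ) :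
    deriv (fun t => Real.log (density { ψ with cov := (Function.update ψ.cov k
        (of fun a b => if a = i ∧ b = j then t else C a b)) } x y)) t₀ =
      deriv (fun t => Real.log (sgameAux K q (fun l => ψ.logit l x) (fun l => ψ.mean l x)
        (Function.update ψ.cov k (of fun a b => if a = i ∧ b = j then t else C a b)) y)) t₀ :=
  rfl

end SGaMEParam

lemma abs_neg_add_mul_div_two_le {a b c A s : ℝ} (ha : |a| ≤ A) (hb : |b| ≤ s) (hc : |c| ≤ s) :
    |(-a + b * c) / 2| ≤ 1 / 2 * (A + s ^ 2) := by
  have hbc : |b * c| ≤ s ^ 2 := by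
    rw [abs_mul, sq]
    exact mul_le_mul hb hc (abs_nonneg _) ((abs_nonneg _).trans hb)
  rw [abs_div, abs_two]
  linarith [abs_add_le (-a) (b * c), abs_neg a]

lemma sqrt_mul_mul_le_mul_one_add {q A B G : ℝ} (hq : 1 ≤ q) (hA : 0 ≤ A) (hAG : A ≤ G)
    (hG : 1 ≤ G) : √q * A * B ≤ G * (1 + q * √q * B ^ 2 * A) := by
  have hs : 1 ≤ √q := Real.one_le_sqrt.mpr hq
  have hsq : √q ^ 2 = q := Real.sq_sqrt (by linarith)
  have hx : √q * B ≤ 1 + q * B ^ 2 := by nlinarith [sq_nonneg (√q * B - 1)]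
  have hGs : 1 ≤ G * √q := by nlinarith
  nlinarith [mul_le_mul_of_nonneg_left hx hA,
    mul_le_mul_of_nonneg_right hGs (by positivity : 0 ≤ q * B ^ 2 * A)]

lemma half_mul_add_le_mul_one_add {A G r : ℝ} (hA : 0 ≤ A) (hAG : A ≤ G) (hr : 0 ≤ r) :
    1 / 2 * (A + r * A ^ 2) ≤ G * (1 + r * A) := by
  nlinarith [mul_le_mul_of_nonneg_left hAG (mul_nonneg hr hA)]

namespace InPsiT

variable {K p q : ℕ} {Agam Abeta aSig ASig : ℝ} {ψ : SGaMEParam K p q} {x : Fin p → ℝ}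

lemma det_cov_pos (hψ : InPsiT Agam Abeta aSig ASig ψ) (k : Fin K) : 0 < (ψ.cov k).det :=
  (hψ.1 k).2.det_pos

lemma abs_sub_mean_le (hψ : InPsiT Agam Abeta aSig ASig ψ) (hx : x ∈ cube p) (y : Fin q → ℝ)
    (k : Fin K) (z : Fin q) : |(y - ψ.mean k x) z| ≤ ‖y‖ + Abeta := by
  have hy : |y z| ≤ ‖y‖ := by simpa [Real.norm_eq_abs] using norm_le_pi_norm y z
  calc |(y - ψ.mean k x) z| = |y z - (ψ.b0 k z + (ψ.b k *ᵥ x) z)| := rfl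
    _ ≤ |y z| + (|ψ.b0 k z| + |(ψ.b k *ᵥ x) z|) :=
      (abs_sub _ _).trans (add_le_add_right (abs_add_le _ _) _)
    _ ≤ ‖y‖ + Abeta := add_le_add hy (hψ.2.2.1 k x hx z)

lemma abs_inv_cov_apply_le (hψ : InPsiT Agam Abeta aSig ASig ψ) (k : Fin K) (a b : Fin q) :
    |(ψ.cov k)⁻¹ a b| ≤ ASig :=
  (hψ.1 k).2.inv.posSemidef.abs_apply_le_of_spectrum_le (fun μ hμ => (hψ.2.2.2 k μ hμ).2) a b

lemma abs_inv_cov_mulVec_sub_mean_le (hψ : InPsiT Agam Abeta aSig ASig ψ) (hx : x ∈ cube p)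
    (y : Fin q → ℝ) (k : Fin K) (z : Fin q) :
    |((ψ.cov k)⁻¹ *ᵥ (y - ψ.mean k x)) z| ≤ √q * ASig * (‖y‖ + Abeta) := by
  simpa using (hψ.1 k).2.inv.posSemidef.abs_mulVec_apply_le_of_spectrum_le
    (fun μ hμ => (hψ.2.2.2 k μ hμ).2) (hψ.abs_sub_mean_le hx y k) z

lemma abs_deriv_log_density_update_g0_le (hψ : InPsiT Agam Abeta aSig ASig ψ) (y : Fin q → ℝ)
    (k : Fin K) :
    |deriv (fun t => Real.log (SGaMEParam.density
        { ψ with g0 := Function.update ψ.g0 k t } x y)) (ψ.g0 k)| ≤ 1 := by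
  rw [SGaMEParam.deriv_log_density_update_g0]
  exact abs_deriv_log_sgameAux_update_logit_le hψ.det_cov_pos k

lemma abs_deriv_log_density_update_b0_le (hψ : InPsiT Agam Abeta aSig ASig ψ) (hx : x ∈ cube p)
    (y : Fin q → ℝ) (k : Fin K) (z : Fin q) :
    |deriv (fun t => Real.log (SGaMEParam.density
        { ψ with b0 := Function.update ψ.b0 k (Function.update (ψ.b0 k) z t) } x y)) (ψ.b0 k z)| ≤
      √q * ASig * (‖y‖ + Abeta) := by
  rw [SGaMEParam.deriv_log_density_update_b0]
  exact (abs_deriv_log_sgameAux_update_mean_le hψ.det_cov_pos k (hψ.1 k).1 z).trans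
    (hψ.abs_inv_cov_mulVec_sub_mean_le hx y k z)

lemma abs_deriv_log_density_update_cov_le (hψ : InPsiT Agam Abeta aSig ASig ψ) (hx : x ∈ cube p)
    (y : Fin q → ℝ) (k : Fin K) (i j : Fin q) :
    |deriv (fun t => Real.log (SGaMEParam.density { ψ with cov := (Function.update ψ.cov k
        (of fun a b => if a = i ∧ b = j then t else ψ.cov k a b)) } x y)) (ψ.cov k i j)| ≤
      1 / 2 * (ASig + q * √q * (‖y‖ + Abeta) ^ 2 * ASig ^ 2) := by
  have hs : 1 ≤ √q := Real.one_le_sqrt.mpr (Nat.one_le_cast.mpr i.pos)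
  have hsq : (√q * ASig * (‖y‖ + Abeta)) ^ 2 ≤ q * √q * (‖y‖ + Abeta) ^ 2 * ASig ^ 2 := by
    rw [mul_pow, mul_pow, Real.sq_sqrt (Nat.cast_nonneg q)]
    nlinarith [mul_le_mul_of_nonneg_left hs
      (by positivity : (0 : ℝ) ≤ q * (‖y‖ + Abeta) ^ 2 * ASig ^ 2)]
  rw [SGaMEParam.deriv_log_density_update_cov]
  refine (abs_deriv_log_sgameAux_update_entry_le hψ.det_cov_pos k (hψ.1 k).1 i j).trans ?_
  refine (abs_neg_add_mul_div_two_le (hψ.abs_inv_cov_apply_le k j i)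
    (hψ.abs_inv_cov_mulVec_sub_mean_le hx y k i)
    (hψ.abs_inv_cov_mulVec_sub_mean_le hx y k j)).trans ?_
  linarith

end InPsiT

theorem sgame_gradient_log_density_bound_general
    (K p q : ℕ)
    (Agam Abeta aSig ASig : ℝ)
    (hASig : 0 < ASig)
    (ψ : SGaMEParam K p q) (hψ : InPsiT Agam Abeta aSig ASig ψ)
    (x : Fin p → ℝ) (hx : x ∈ cube p) (y : Fin q → ℝ) (k : Fin K) :
    -- derivative with respect to γ_{k0} equals the derivative with respect to γ_kᵀx,
    -- and is bounded by 1 + K·A_G (hence by G(y))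
    (deriv (fun t : ℝ =>
        Real.log (SGaMEParam.density { ψ with g0 := Function.update ψ.g0 k t } x y))
        (ψ.g0 k) =
      deriv (fun t : ℝ =>
        Real.log (sgameAux K q (Function.update (fun l => ψ.logit l x) k (ψ.g0 k + t))
          (fun l => ψ.mean l x) ψ.cov y)) (∑ j, ψ.g k j * x j)) ∧
    (|deriv (fun t : ℝ =>
        Real.log (SGaMEParam.density { ψ with g0 := Function.update ψ.g0 k t } x y))
        (ψ.g0 k)| ≤ 1 + K * AGbd K Agam) ∧
    (|deriv (fun t : ℝ =>
        Real.log (SGaMEParam.density { ψ with g0 := Function.update ψ.g0 k t } x y))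
        (ψ.g0 k)| ≤
      max ASig (1 + K * AGbd K Agam) * (1 + q * Real.sqrt q * (‖y‖ + Abeta) ^ 2 * ASig)) ∧
    -- derivatives with respect to the components of β_{k0} and of β_k x
    (∀ z : Fin q,
      deriv (fun t : ℝ =>
        Real.log (SGaMEParam.density
          { ψ with b0 := Function.update ψ.b0 k (Function.update (ψ.b0 k) z t) } x y))
        (ψ.b0 k z) =
      deriv (fun t : ℝ =>
        Real.log (sgameAux K q (fun l => ψ.logit l x)
          (Function.update (fun l => ψ.mean l x) k
            (Function.update (ψ.mean k x) z (ψ.b0 k z + t))) ψ.cov y))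
        (((ψ.b k).mulVec x) z)) ∧
    (∀ z : Fin q,
      |deriv (fun t : ℝ =>
        Real.log (SGaMEParam.density
          { ψ with b0 := Function.update ψ.b0 k (Function.update (ψ.b0 k) z t) } x y))
        (ψ.b0 k z)| ≤ Real.sqrt q * ASig * (‖y‖ + Abeta)) ∧
    (∀ z : Fin q,
      |deriv (fun t : ℝ =>
        Real.log (SGaMEParam.density
          { ψ with b0 := Function.update ψ.b0 k (Function.update (ψ.b0 k) z t) } x y))
        (ψ.b0 k z)| ≤
      max ASig (1 + K * AGbd K Agam) * (1 + q * Real.sqrt q * (‖y‖ + Abeta) ^ 2 * ASig)) ∧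
    -- derivatives with respect to the entries of Σ_k
    (∀ z1 z2 : Fin q,
      |deriv (fun t : ℝ =>
        Real.log (SGaMEParam.density
          { ψ with cov := (Function.update ψ.cov k
              (Matrix.of fun a b => if a = z1 ∧ b = z2 then t else ψ.cov k a b)) } x y))
        (ψ.cov k z1 z2)| ≤
      (1 / 2 : ℝ) * (ASig + q * Real.sqrt q * (‖y‖ + Abeta) ^ 2 * ASig ^ 2)) ∧
    (∀ z1 z2 : Fin q,
      |deriv (fun t : ℝ =>
        Real.log (SGaMEParam.density
          { ψ with cov := (Function.update ψ.cov k
              (Matrix.of fun a b => if a = z1 ∧ b = z2 then t else ψ.cov k a b)) } x y))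
        (ψ.cov k z1 z2)| ≤
      max ASig (1 + K * AGbd K Agam) * (1 + q * Real.sqrt q * (‖y‖ + Abeta) ^ 2 * ASig)) := by
  have hγ := hψ.abs_deriv_log_density_update_g0_le (x := x) y k
  have hAG : 1 ≤ 1 + K * AGbd K Agam := le_add_of_nonneg_right (by unfold AGbd; positivity)
  have hG : 1 ≤ max ASig (1 + K * AGbd K Agam) := le_max_of_le_right hAG
  refine ⟨?_, hγ.trans hAG, ?_, fun z => ?_,
    hψ.abs_deriv_log_density_update_b0_le hx y k, fun z => ?_,
    hψ.abs_deriv_log_density_update_cov_le hx y k, fun i j => ?_⟩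
  · rw [SGaMEParam.deriv_log_density_update_g0]
    exact (deriv_comp_const_add _ _ _).symm
  · exact (hγ.trans hG).trans
      (le_mul_of_one_le_right (by linarith) (le_add_of_nonneg_right (by positivity)))
  · rw [SGaMEParam.deriv_log_density_update_b0]
    exact (deriv_comp_const_add _ _ _).symm
  · exact (hψ.abs_deriv_log_density_update_b0_le hx y k z).trans (sqrt_mul_mul_le_mul_one_add
      (Nat.one_le_cast.mpr z.pos) hASig.le (le_max_left _ _) hG)
  · exact (hψ.abs_deriv_log_density_update_cov_le hx y k i j).trans
      (half_mul_add_le_mul_one_add hASig.le (le_max_left _ _) (by positivity))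

/-- uniform bound on the gradient of the log-density. -/
theorem sgame_gradient_log_density_bound
    (K p q : ℕ) (hK : 1 ≤ K) (hp : 1 ≤ p) (hq : 1 ≤ q)
    (Agam Abeta aSig ASig : ℝ)
    (hAgam : 0 < Agam) (hAbeta : 0 < Abeta) (haSig : 0 < aSig) (hASig : 0 < ASig)
    (ψ : SGaMEParam K p q) (hψ : InPsiT Agam Abeta aSig ASig ψ)
    (x : Fin p → ℝ) (hx : x ∈ cube p) (y : Fin q → ℝ) (k : Fin K) :
    -- derivative with respect to γ_{k0} equals the derivative with respect to γ_kᵀx,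
    -- and is bounded by 1 + K·A_G (hence by G(y))
    (deriv (fun t : ℝ =>
        Real.log (SGaMEParam.density { ψ with g0 := Function.update ψ.g0 k t } x y))
        (ψ.g0 k) =
      deriv (fun t : ℝ =>
        Real.log (sgameAux K q (Function.update (fun l => ψ.logit l x) k (ψ.g0 k + t))
          (fun l => ψ.mean l x) ψ.cov y)) (∑ j, ψ.g k j * x j)) ∧
    (|deriv (fun t : ℝ =>
        Real.log (SGaMEParam.density { ψ with g0 := Function.update ψ.g0 k t } x y))
        (ψ.g0 k)| ≤ 1 + K * AGbd K Agam) ∧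
    (|deriv (fun t : ℝ =>
        Real.log (SGaMEParam.density { ψ with g0 := Function.update ψ.g0 k t } x y))
        (ψ.g0 k)| ≤
      max ASig (1 + K * AGbd K Agam) * (1 + q * Real.sqrt q * (‖y‖ + Abeta) ^ 2 * ASig)) ∧
    -- derivatives with respect to the components of β_{k0} and of β_k x
    (∀ z : Fin q,
      deriv (fun t : ℝ =>
        Real.log (SGaMEParam.density
          { ψ with b0 := Function.update ψ.b0 k (Function.update (ψ.b0 k) z t) } x y))
        (ψ.b0 k z) =
      deriv (fun t : ℝ =>
        Real.log (sgameAux K q (fun l => ψ.logit l x)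
          (Function.update (fun l => ψ.mean l x) k
            (Function.update (ψ.mean k x) z (ψ.b0 k z + t))) ψ.cov y))
        (((ψ.b k).mulVec x) z)) ∧
    (∀ z : Fin q,
      |deriv (fun t : ℝ =>
        Real.log (SGaMEParam.density
          { ψ with b0 := Function.update ψ.b0 k (Function.update (ψ.b0 k) z t) } x y))
        (ψ.b0 k z)| ≤ Real.sqrt q * ASig * (‖y‖ + Abeta)) ∧
    (∀ z : Fin q,
      |deriv (fun t : ℝ =>
        Real.log (SGaMEParam.density
          { ψ with b0 := Function.update ψ.b0 k (Function.update (ψ.b0 k) z t) } x y))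
        (ψ.b0 k z)| ≤
      max ASig (1 + K * AGbd K Agam) * (1 + q * Real.sqrt q * (‖y‖ + Abeta) ^ 2 * ASig)) ∧
    -- derivatives with respect to the entries of Σ_k
    (∀ z1 z2 : Fin q,
      |deriv (fun t : ℝ =>
        Real.log (SGaMEParam.density
          { ψ with cov := (Function.update ψ.cov k
              (Matrix.of fun a b => if a = z1 ∧ b = z2 then t else ψ.cov k a b)) } x y))
        (ψ.cov k z1 z2)| ≤
      (1 / 2 : ℝ) * (ASig + q * Real.sqrt q * (‖y‖ + Abeta) ^ 2 * ASig ^ 2)) ∧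
    (∀ z1 z2 : Fin q,
      |deriv (fun t : ℝ =>
        Real.log (SGaMEParam.density
          { ψ with cov := (Function.update ψ.cov k
              (Matrix.of fun a b => if a = z1 ∧ b = z2 then t else ψ.cov k a b)) } x y))
        (ψ.cov k z1 z2)| ≤
      max ASig (1 + K * AGbd K Agam) * (1 + q * Real.sqrt q * (‖y‖ + Abeta) ^ 2 * ASig)) :=
  sgame_gradient_log_density_bound_general K p q Agam Abeta aSig ASig hASig ψ hψ x hx y k
end
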